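/- arXiv:1503.00144 — 4 statements merged into one kernel-verified Lean document; each statement's English description precedes it below -/
import Mathlib

section
/- Let 1 ≤ q < p ≤ ∞ and ν ∈ ℕ. Then the entropy numbers of the identity operator from l_p^ν to l_q^ν satisfy e_k(I_ν : l_p^ν → l_q^ν) ≍ 2^{-k/ν} ν^{1/q - 1/p} for all k ∈ ℕ, with implied constants depending only on p and q. -/
open scoped ENNReal

/-- The `k`-th entropy number of a bounded linear operator `T : X → Y`. -/
noncomputable def entropyNumber {X Y : Type*} [NormedAddCommGroup X] [NormedSpace ℝ X]
    [NormedAddCommGroup Y] [NormedSpace ℝ Y] (k : ℕ) (T : X →L[ℝ] Y) : ℝ :=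
  sInf {ε : ℝ | 0 < ε ∧ ∃ c : Fin (2 ^ (k - 1)) → Y,
    ∀ x : X, ‖x‖ ≤ 1 → ∃ i, ‖T x - c i‖ ≤ ε}

/-- The identity operator `I_ν : l_p^ν → l_q^ν` on `ℝ^ν`. -/
noncomputable def idLp (p q : ℝ≥0∞) [Fact (1 ≤ p)] [Fact (1 ≤ q)] (ν : ℕ) :
    PiLp p (fun _ : Fin ν => ℝ) →L[ℝ] PiLp q (fun _ : Fin ν => ℝ) :=
  LinearMap.toContinuousLinearMap
    ((WithLp.linearEquiv q ℝ (Fin ν → ℝ)).symm.toLinearMap.comp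
      (WithLp.linearEquiv p ℝ (Fin ν → ℝ)).toLinearMap)

/-!
Upper bound: by a volume argument, the unit ball of any `n`-dimensional normed space is covered
by `N` balls of radius `3 N^{-1/n}` (a maximal `ε`-separated subset of the ball is an `ε`-net, and
the disjoint balls of radius `ε/2` around its points fit into the ball of radius `1 + ε/2`).
Composing with `‖I : ℓ_p^ν → ℓ_q^ν‖ ≤ ν^{1/q-1/p}` gives `e_k ≤ 3 · 2^{-(k-1)/ν} ν^{1/q-1/p}`.

Lower bound: if the image of the unit ball is covered by `N` balls of radius `ε`, comparing volumes
gives `vol(B_p) ≤ N ε^ν vol(B_q)`. The cube of side `2ν^{-1/p}` lies in `B_p`, and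
`B_q ⊆ ν^{1-1/q} B_1` with `vol(B_1) = 2^ν/ν!` and `ν^ν/ν! ≤ e^ν`, so
`vol(B_p)/vol(B_q) ≥ (ν^{1/q-1/p}/e)^ν`.
-/

open Metric MeasureTheory Module WithLp
open scoped NNReal ENNReal

theorem Real.rpow_neg_inv_natCast_pow {x : ℝ} (hx : 0 ≤ x) {n : ℕ} (hn : n ≠ 0) :
    (x ^ (-(n : ℝ)⁻¹)) ^ n = x⁻¹ := by
  rw [Real.rpow_neg hx, inv_pow, Real.rpow_inv_natCast_pow hx hn]

theorem Set.exists_subset_range_of_encard_le {α : Type*} [Nonempty α] {s : Set α} {N : ℕ}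
    (h : s.encard ≤ N) : ∃ c : Fin N → α, s ⊆ Set.range c := by
  obtain ⟨n, f, hf, rfl⟩ := (Set.finite_of_encard_le_coe h).fin_param
  have hn : n ≤ N := by simpa using hf.encard_range.trans h
  refine ⟨Function.extend (Fin.castLE hn) f (Classical.arbitrary _), ?_⟩
  rintro _ ⟨i, rfl⟩
  exact ⟨Fin.castLE hn i, (Fin.castLE_injective hn).extend_apply _ _ i⟩

section FiniteDimensional

variable {E : Type*} [NormedAddCommGroup E] [NormedSpace ℝ E] [FiniteDimensional ℝ E]

theorem Metric.IsSeparated.encard_mul_le_of_subset_closedBall {C : Set E} {ε : ℝ≥0}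
    (hC : IsSeparated (ε : ℝ≥0∞) C) (hC₁ : C ⊆ closedBall 0 1) :
    (C.encard : ℝ≥0∞) * ENNReal.ofReal ((ε : ℝ) ^ finrank ℝ E)
      ≤ ENNReal.ofReal ((2 + ε : ℝ) ^ finrank ℝ E) := by
  borelize E
  obtain ⟨μ, _⟩ : ∃ μ : Measure E, μ.IsAddHaarMeasure := ⟨Measure.addHaar, inferInstance⟩
  have hB₀ : μ (closedBall 0 2⁻¹) ≠ 0 := (measure_closedBall_pos μ 0 (by norm_num)).ne'
  have hB : μ (closedBall 0 2⁻¹) ≠ ⊤ := measure_closedBall_lt_top.ne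
  have hdisj : Pairwise (Function.onFun Disjoint fun c : C => closedBall (c : E) (ε * 2⁻¹)) := by
    intro c d hcd
    refine Set.disjoint_left.2 fun x hxc hxd => ?_
    have hsep : (ε : ℝ≥0∞) < edist (c : E) d := hC c.2 d.2 (Subtype.coe_ne_coe.2 hcd)
    rw [edist_nndist, ENNReal.coe_lt_coe, ← NNReal.coe_lt_coe, coe_nndist] at hsep
    rw [mem_closedBall] at hxc hxd
    linarith [dist_triangle_left (c : E) d x]
  have hsub : (⋃ c : C, closedBall (c : E) (ε * 2⁻¹)) ⊆ closedBall 0 ((2 + ε) * 2⁻¹) := by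
    refine Set.iUnion_subset fun c => closedBall_subset_closedBall' ?_
    linarith [mem_closedBall.1 (hC₁ c.2)]
  rw [← ENNReal.mul_le_mul_iff_left hB₀ hB]
  calc (C.encard : ℝ≥0∞) * ENNReal.ofReal ((ε : ℝ) ^ finrank ℝ E) * μ (closedBall 0 2⁻¹)
      = ∑' c : C, μ (closedBall (c : E) (ε * 2⁻¹)) := by
        simp only [Measure.addHaar_closedBall_mul μ _ ε.coe_nonneg (by norm_num : (0 : ℝ) ≤ 2⁻¹),
          ENNReal.tsum_const, mul_assoc]
        rfl
    _ ≤ μ (⋃ c : C, closedBall (c : E) (ε * 2⁻¹)) :=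
        tsum_meas_le_meas_iUnion_of_disjoint μ (fun _ => measurableSet_closedBall) hdisj
    _ ≤ μ (closedBall 0 ((2 + ε) * 2⁻¹)) := measure_mono hsub
    _ = ENNReal.ofReal ((2 + ε : ℝ) ^ finrank ℝ E) * μ (closedBall 0 2⁻¹) :=
        Measure.addHaar_closedBall_mul μ _ (by positivity) (by norm_num)

theorem exists_fin_cover_closedBall_of_pow_le {N : ℕ} {ε : ℝ≥0} (hε : ε ≠ 0)
    (hN : (2 + ε : ℝ) ^ finrank ℝ E ≤ N * (ε : ℝ) ^ finrank ℝ E) :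
    ∃ c : Fin N → E, ∀ x ∈ closedBall (0 : E) 1, ∃ i, dist x (c i) ≤ ε := by
  have hpack : packingNumber ε (closedBall (0 : E) 1) ≤ N := by
    refine iSup₂_le fun C hC₁ => iSup_le fun hC => ?_
    have hε' : ENNReal.ofReal ((ε : ℝ) ^ finrank ℝ E) ≠ 0 := by simp [hε]
    have := (hC.encard_mul_le_of_subset_closedBall hC₁).trans (ENNReal.ofReal_le_ofReal hN)
    rw [ENNReal.ofReal_mul (Nat.cast_nonneg _), ENNReal.ofReal_natCast,
      ENNReal.mul_le_mul_iff_left hε' ENNReal.ofReal_ne_top] at this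
    exact_mod_cast this
  have htop : packingNumber ε (closedBall (0 : E) 1) ≠ ⊤ := ne_top_of_le_ne_top (by simp) hpack
  obtain ⟨c, hc⟩ := Set.exists_subset_range_of_encard_le
    ((encard_maximalSeparatedSet htop).trans_le hpack)
  refine ⟨c, fun x hx => ?_⟩
  obtain ⟨y, hy, hxy⟩ := isCover_maximalSeparatedSet htop hx
  obtain ⟨i, rfl⟩ := hc hy
  exact ⟨i, by simpa [edist_dist, ENNReal.ofReal_le_iff_le_toReal] using hxy⟩

theorem exists_fin_cover_closedBall {N : ℕ} (hN : N ≠ 0) :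
    ∃ c : Fin N → E, ∀ x ∈ closedBall (0 : E) 1,
      ∃ i, dist x (c i) ≤ 3 * (N : ℝ) ^ (-(finrank ℝ E : ℝ)⁻¹) := by
  set n := finrank ℝ E
  set r : ℝ := 3 * (N : ℝ) ^ (-(n : ℝ)⁻¹)
  have hN₀ : (0 : ℝ) < N := by positivity
  have hr : 0 < r := by positivity
  by_cases hr₁ : 1 ≤ r
  · exact ⟨fun _ => 0, fun x hx => ⟨⟨0, Nat.pos_of_ne_zero hN⟩, (mem_closedBall.1 hx).trans hr₁⟩⟩
  have hn : n ≠ 0 := by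
    rintro hn
    simp [r, hn] at hr₁
  refine exists_fin_cover_closedBall_of_pow_le (ε := ⟨r, hr.le⟩)
    (ne_of_gt (show (0 : ℝ≥0) < ⟨r, hr.le⟩ from hr)) ?_
  calc (2 + r) ^ n ≤ 3 ^ n := pow_le_pow_left₀ (by positivity) (by linarith) n
    _ = N * r ^ n := by
        rw [mul_pow, Real.rpow_neg_inv_natCast_pow hN₀.le hn]
        field_simp

end FiniteDimensional

section EntropyNumber

variable {X Y : Type*} [NormedAddCommGroup X] [NormedSpace ℝ X] [NormedAddCommGroup Y]
  [NormedSpace ℝ Y] {T : X →L[ℝ] Y} {k : ℕ}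

theorem entropyNumber_le {ε : ℝ} (hε : 0 < ε) (c : Fin (2 ^ (k - 1)) → Y)
    (hc : ∀ x : X, ‖x‖ ≤ 1 → ∃ i, ‖T x - c i‖ ≤ ε) : entropyNumber k T ≤ ε :=
  csInf_le ⟨0, fun _ h => h.1.le⟩ ⟨hε, c, hc⟩

theorem le_entropyNumber {m : ℝ}
    (h : ∀ ε > 0, ∀ c : Fin (2 ^ (k - 1)) → Y, (∀ x : X, ‖x‖ ≤ 1 → ∃ i, ‖T x - c i‖ ≤ ε) → m ≤ ε) :
    m ≤ entropyNumber k T := by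
  refine le_csInf ⟨‖T‖ + 1, by positivity, fun _ => 0, fun x hx => ⟨⟨0, by positivity⟩, ?_⟩⟩ ?_
  · rw [sub_zero]
    exact (T.le_of_opNorm_le le_rfl x).trans (by nlinarith [norm_nonneg x, norm_nonneg T])
  · rintro ε ⟨hε, c, hc⟩
    exact h ε hε c hc

theorem entropyNumber_le_of_opNorm_le [FiniteDimensional ℝ X] {C : ℝ} (hC : 0 < C)
    (hT : ‖T‖ ≤ C) :
    entropyNumber k T ≤ C * (3 * ((2 ^ (k - 1) : ℕ) : ℝ) ^ (-(finrank ℝ X : ℝ)⁻¹)) := by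
  obtain ⟨c, hc⟩ := exists_fin_cover_closedBall (E := X) (N := 2 ^ (k - 1)) (by positivity)
  refine entropyNumber_le (by positivity) (fun i => T (c i)) fun x hx => ?_
  obtain ⟨i, hi⟩ := hc x (mem_closedBall_zero_iff.2 hx)
  refine ⟨i, ?_⟩
  rw [← map_sub]
  exact (T.le_of_opNorm_le hT _).trans (mul_le_mul_of_nonneg_left (dist_eq_norm x _ ▸ hi) hC.le)

section Measure

variable [FiniteDimensional ℝ Y] [MeasurableSpace Y] [BorelSpace Y] (μ : Measure Y)
  [μ.IsAddHaarMeasure]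

theorem measure_image_closedBall_le_of_cover {N : ℕ} {ε : ℝ} (hε : 0 ≤ ε) (c : Fin N → Y)
    (hc : ∀ x : X, ‖x‖ ≤ 1 → ∃ i, ‖T x - c i‖ ≤ ε) :
    μ (T '' closedBall 0 1) ≤ N * ENNReal.ofReal (ε ^ finrank ℝ Y) * μ (closedBall 0 1) := by
  have hcover : T '' closedBall 0 1 ⊆ ⋃ i, closedBall (c i) ε := by
    rintro _ ⟨x, hx, rfl⟩
    obtain ⟨i, hi⟩ := hc x (mem_closedBall_zero_iff.1 hx)
    exact Set.mem_iUnion.2 ⟨i, mem_closedBall_iff_norm.2 hi⟩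
  refine (measure_mono hcover).trans ((measure_iUnion_fintype_le μ _).trans_eq ?_)
  simp_rw [Measure.addHaar_closedBall' μ _ hε, Finset.sum_const, Finset.card_univ,
    Fintype.card_fin, nsmul_eq_mul, mul_assoc]

theorem le_entropyNumber_of_measure_bounds [Nontrivial Y] {a b : ℝ} (ha : 0 ≤ a) (hb : 0 < b)
    (hB : μ (closedBall 0 1) ≤ ENNReal.ofReal (b ^ finrank ℝ Y))
    (hTB : ENNReal.ofReal (a ^ finrank ℝ Y) ≤ μ (T '' closedBall 0 1)) :
    ((2 ^ (k - 1) : ℕ) : ℝ) ^ (-(finrank ℝ Y : ℝ)⁻¹) * a / b ≤ entropyNumber k T := by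
  set n := finrank ℝ Y
  set N : ℕ := 2 ^ (k - 1)
  have hN : (0 : ℝ) < N := by positivity
  have hn : n ≠ 0 := finrank_pos.ne'
  refine le_entropyNumber fun ε hε c hc => ?_
  have hvol : ENNReal.ofReal (a ^ n) ≤ N * ENNReal.ofReal (ε ^ n) * ENNReal.ofReal (b ^ n) :=
    hTB.trans ((measure_image_closedBall_le_of_cover μ hε.le c hc).trans (by gcongr))
  rw [← ENNReal.ofReal_natCast, ← ENNReal.ofReal_mul (by positivity),
    ← ENNReal.ofReal_mul (by positivity), ENNReal.ofReal_le_ofReal_iff (by positivity)] at hvol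
  refine (pow_le_pow_iff_left₀ (by positivity) hε.le hn).1 ?_
  rw [div_pow, mul_pow, Real.rpow_neg_inv_natCast_pow hN.le hn,
    div_le_iff₀ (by positivity), inv_mul_le_iff₀ hN]
  linarith

end Measure

end EntropyNumber

namespace PiLp

variable {ι : Type*} [Fintype ι] {β : ι → Type*} [∀ i, SeminormedAddCommGroup (β i)]

theorem norm_toLp_le_card_rpow_mul_norm (p : ℝ≥0∞) [Fact (1 ≤ p)] (x : ∀ i, β i) :
    ‖toLp p x‖ ≤ (Fintype.card ι : ℝ) ^ (p⁻¹).toReal * ‖x‖ := by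
  simpa [one_div, dist_zero_right] using (lipschitzWith_toLp p β).dist_le_mul x 0

theorem norm_toLp_ofLp_le {p q : ℝ≥0∞} [Fact (1 ≤ p)] [Fact (1 ≤ q)] (hqp : q ≤ p)
    (x : PiLp p β) :
    ‖toLp q (ofLp x)‖ ≤ (Fintype.card ι : ℝ) ^ ((q⁻¹).toReal - (p⁻¹).toReal) * ‖x‖ := by
  rcases eq_or_ne p ∞ with rfl | hp
  · simpa using norm_toLp_le_card_rpow_mul_norm q (ofLp x)
  have hq : q ≠ ∞ := ne_top_of_le_ne_top hp hqp
  have ha : 1 ≤ q.toReal := by simpa using ENNReal.toReal_mono hq (Fact.out : 1 ≤ q)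
  have hab : q.toReal ≤ p.toReal := ENNReal.toReal_mono hp hqp
  set a := q.toReal
  set b := p.toReal
  have ha₀ : 0 < a := by linarith
  have hb₀ : 0 < b := by linarith
  have hsum := Real.rpow_sum_le_const_mul_sum_rpow_of_nonneg Finset.univ
    (f := fun i => ‖x i‖ ^ a) ((one_le_div ha₀).2 hab) fun i _ => by positivity
  simp only [← Real.rpow_mul (norm_nonneg _), mul_div_cancel₀ _ ha₀.ne', Finset.card_univ] at hsum
  rw [norm_eq_sum (by linarith), norm_eq_sum (by linarith), ENNReal.toReal_inv,
    ENNReal.toReal_inv]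
  have hSa : 0 ≤ ∑ i, ‖x i‖ ^ a := by positivity
  calc (∑ i, ‖x i‖ ^ a) ^ (1 / a) = ((∑ i, ‖x i‖ ^ a) ^ (b / a)) ^ (1 / b) := by
        rw [← Real.rpow_mul hSa]
        field_simp
    _ ≤ ((Fintype.card ι : ℝ) ^ (b / a - 1) * ∑ i, ‖x i‖ ^ b) ^ (1 / b) := by gcongr
    _ = (Fintype.card ι : ℝ) ^ (a⁻¹ - b⁻¹) * (∑ i, ‖x i‖ ^ b) ^ (1 / b) := by
        rw [Real.mul_rpow (by positivity) (by positivity), ← Real.rpow_mul (Nat.cast_nonneg _)]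
        field_simp

end PiLp

section Volume

variable {ι : Type*} [Fintype ι]

theorem closedBall_subset_toLp_preimage_closedBall (p : ℝ≥0∞) [Fact (1 ≤ p)] :
    closedBall (0 : ι → ℝ) ((Fintype.card ι : ℝ) ^ (-(p⁻¹).toReal))
      ⊆ toLp p ⁻¹' closedBall 0 1 := by
  intro x hx
  rw [Set.mem_preimage, mem_closedBall_zero_iff]
  rcases isEmpty_or_nonempty ι with hι | hι
  · simp [Subsingleton.elim x 0]
  have hn : (0 : ℝ) < Fintype.card ι := by exact_mod_cast Fintype.card_pos
  calc ‖toLp p x‖ ≤ (Fintype.card ι : ℝ) ^ (p⁻¹).toReal * ‖x‖ :=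
        PiLp.norm_toLp_le_card_rpow_mul_norm p x
    _ ≤ (Fintype.card ι : ℝ) ^ (p⁻¹).toReal * (Fintype.card ι : ℝ) ^ (-(p⁻¹).toReal) := by
        gcongr
        simpa using hx
    _ = 1 := by rw [← Real.rpow_add hn, add_neg_cancel, Real.rpow_zero]

theorem volume_setOf_norm_toLp_one_le [Nonempty ι] (r : ℝ) :
    volume {x : ι → ℝ | ‖toLp 1 x‖ ≤ r} = ENNReal.ofReal r ^ Fintype.card ι
      * ENNReal.ofReal (2 ^ Fintype.card ι / (Fintype.card ι).factorial) := by
  have := volume_sum_rpow_le ι le_rfl r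
  simp only [Real.rpow_one, div_one, one_add_one_eq_two, Real.Gamma_two, mul_one,
    Real.Gamma_nat_eq_factorial] at this
  simpa [PiLp.norm_eq_of_L1] using this

theorem volume_toLp_preimage_closedBall_le [Nonempty ι] (p : ℝ≥0∞) [Fact (1 ≤ p)] :
    volume (toLp p ⁻¹' closedBall (0 : PiLp p fun _ : ι => ℝ) 1) ≤ ENNReal.ofReal
      ((2 * Real.exp 1 * (Fintype.card ι : ℝ) ^ (-(p⁻¹).toReal)) ^ Fintype.card ι) := by
  set n := Fintype.card ι
  set δ := (p⁻¹).toReal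
  have hn : (0 : ℝ) < n := by exact_mod_cast Fintype.card_pos
  have hsub : toLp p ⁻¹' closedBall 0 1 ⊆ {x : ι → ℝ | ‖toLp 1 x‖ ≤ n * n ^ (-δ)} := by
    intro x hx
    rw [Set.mem_preimage, mem_closedBall_zero_iff] at hx
    have := PiLp.norm_toLp_ofLp_le (q := 1) (Fact.out : 1 ≤ p) (toLp p x)
    rw [ofLp_toLp, inv_one, ENNReal.toReal_one, sub_eq_add_neg, Real.rpow_add hn,
      Real.rpow_one] at this
    exact this.trans (mul_le_of_le_one_right (by positivity) hx)
  refine (measure_mono hsub).trans ?_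
  rw [volume_setOf_norm_toLp_one_le, ← ENNReal.ofReal_pow (by positivity),
    ← ENNReal.ofReal_mul (by positivity)]
  refine ENNReal.ofReal_le_ofReal ?_
  have hfac : (n : ℝ) ^ n / n.factorial ≤ Real.exp 1 ^ n := by
    simpa [← Real.exp_nat_mul] using Real.pow_div_factorial_le_exp (n : ℝ) hn.le n
  calc (n * n ^ (-δ)) ^ n * (2 ^ n / n.factorial)
      = (n : ℝ) ^ n / n.factorial * (2 * n ^ (-δ)) ^ n := by ring
    _ ≤ Real.exp 1 ^ n * (2 * n ^ (-δ)) ^ n := by gcongr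
    _ = (2 * Real.exp 1 * n ^ (-δ)) ^ n := by ring

end Volume

section IdLp

theorem idLp_apply (p q : ℝ≥0∞) [Fact (1 ≤ p)] [Fact (1 ≤ q)] {ν : ℕ}
    (x : PiLp p fun _ : Fin ν => ℝ) : idLp p q ν x = toLp q (ofLp x) := rfl

theorem finrank_piLp_fin (p : ℝ≥0∞) (ν : ℕ) : finrank ℝ (PiLp p fun _ : Fin ν => ℝ) = ν := by
  rw [(WithLp.linearEquiv p ℝ (Fin ν → ℝ)).finrank_eq, Module.finrank_fin_fun]

variable {p q : ℝ≥0∞} [Fact (1 ≤ p)] [Fact (1 ≤ q)] {ν : ℕ}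

theorem norm_idLp_le (hqp : q ≤ p) : ‖idLp p q ν‖ ≤ (ν : ℝ) ^ ((q⁻¹).toReal - (p⁻¹).toReal) :=
  ContinuousLinearMap.opNorm_le_bound _ (by positivity) fun x => by
    simpa [idLp_apply] using PiLp.norm_toLp_ofLp_le hqp x

theorem entropyNumber_idLp_le (hqp : q ≤ p) (hν : ν ≠ 0) (k : ℕ) :
    entropyNumber k (idLp p q ν) ≤ (ν : ℝ) ^ ((q⁻¹).toReal - (p⁻¹).toReal)
      * (3 * ((2 ^ (k - 1) : ℕ) : ℝ) ^ (-(ν : ℝ)⁻¹)) := by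
  have hD : (0 : ℝ) < (ν : ℝ) ^ ((q⁻¹).toReal - (p⁻¹).toReal) :=
    Real.rpow_pos_of_pos (by exact_mod_cast Nat.pos_of_ne_zero hν) _
  have hT := norm_idLp_le (ν := ν) hqp
  have := entropyNumber_le_of_opNorm_le (X := PiLp p fun _ : Fin ν => ℝ) (k := k) hD hT
  rwa [finrank_piLp_fin] at this

theorem entropyNumber_idLp_ge (hν : ν ≠ 0) (k : ℕ) :
    ((2 ^ (k - 1) : ℕ) : ℝ) ^ (-(ν : ℝ)⁻¹) * (ν : ℝ) ^ ((q⁻¹).toReal - (p⁻¹).toReal)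
      / Real.exp 1 ≤ entropyNumber k (idLp p q ν) := by
  have : NeZero ν := ⟨hν⟩
  have hν₀ : (0 : ℝ) < ν := by exact_mod_cast Nat.pos_of_ne_zero hν
  let μ : Measure (PiLp q fun _ : Fin ν => ℝ) := volume.map (toLp q)
  have : μ.IsAddHaarMeasure :=
    (PiLp.continuousLinearEquiv q ℝ fun _ : Fin ν => ℝ).symm.isAddHaarMeasure_map volume
  have hB : μ (closedBall 0 1)
      ≤ ENNReal.ofReal ((2 * Real.exp 1 * (ν : ℝ) ^ (-(q⁻¹).toReal)) ^ ν) := by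
    rw [Measure.map_apply (measurable_toLp q _) measurableSet_closedBall]
    simpa only [Fintype.card_fin] using volume_toLp_preimage_closedBall_le (ι := Fin ν) q
  have hTB : ENNReal.ofReal ((2 * (ν : ℝ) ^ (-(p⁻¹).toReal)) ^ ν)
      ≤ μ (idLp p q ν '' closedBall 0 1) :=
    calc ENNReal.ofReal ((2 * (ν : ℝ) ^ (-(p⁻¹).toReal)) ^ ν)
        = volume (closedBall (0 : Fin ν → ℝ) ((ν : ℝ) ^ (-(p⁻¹).toReal))) := by
          rw [Real.volume_pi_closedBall _ (by positivity), Fintype.card_fin]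
      _ ≤ volume (toLp q ⁻¹' (idLp p q ν '' closedBall 0 1)) := by
          refine measure_mono fun x hx => ⟨toLp p x, ?_, rfl⟩
          have := closedBall_subset_toLp_preimage_closedBall (ι := Fin ν) p
          rw [Fintype.card_fin] at this
          exact this hx
      _ ≤ μ (idLp p q ν '' closedBall 0 1) :=
          Measure.le_map_apply (measurable_toLp q _).aemeasurable _
  have := le_entropyNumber_of_measure_bounds (k := k) (T := idLp p q ν) μ
    (a := 2 * (ν : ℝ) ^ (-(p⁻¹).toReal)) (b := 2 * Real.exp 1 * (ν : ℝ) ^ (-(q⁻¹).toReal))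
    (by positivity) (by positivity) (by rwa [finrank_piLp_fin]) (by rwa [finrank_piLp_fin])
  rw [finrank_piLp_fin] at this
  convert this using 1
  rw [Real.rpow_sub hν₀, Real.rpow_neg hν₀.le, Real.rpow_neg hν₀.le]
  field_simp

end IdLp

theorem two_rpow_neg_div_le_natCast_two_pow_pred_rpow {k ν : ℕ} (hk : 1 ≤ k) (hν : 1 ≤ ν) :
    (2 : ℝ) ^ (-(k : ℝ) / ν) ≤ ((2 ^ (k - 1) : ℕ) : ℝ) ^ (-(ν : ℝ)⁻¹) ∧
      ((2 ^ (k - 1) : ℕ) : ℝ) ^ (-(ν : ℝ)⁻¹) ≤ 2 * (2 : ℝ) ^ (-(k : ℝ) / ν) := by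
  have h : ((2 ^ (k - 1) : ℕ) : ℝ) ^ (-(ν : ℝ)⁻¹) = 2 ^ (ν : ℝ)⁻¹ * 2 ^ (-(k : ℝ) / ν) := by
    rw [Nat.cast_pow, Nat.cast_ofNat, ← Real.rpow_natCast, ← Real.rpow_mul zero_le_two,
      ← Real.rpow_add zero_lt_two, Nat.cast_sub hk]
    ring_nf
  have h₁ : 1 ≤ (2 : ℝ) ^ (ν : ℝ)⁻¹ := Real.one_le_rpow one_le_two (by positivity)
  have h₂ : (2 : ℝ) ^ (ν : ℝ)⁻¹ ≤ 2 := by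
    simpa using Real.rpow_le_rpow_of_exponent_le one_le_two
      (inv_le_one_of_one_le₀ (by exact_mod_cast hν : (1 : ℝ) ≤ ν))
  rw [h]
  constructor <;> nlinarith [Real.rpow_pos_of_pos two_pos (-(k : ℝ) / ν)]

theorem entropy_id_lp_lq_q_lt_p_general (p q : ℝ≥0∞) [Fact (1 ≤ p)] [Fact (1 ≤ q)]
    (hqp : q < p) :
    ∃ c : ℝ, 0 < c ∧ ∀ ν : ℕ, 1 ≤ ν → ∀ k : ℕ, 1 ≤ k →
      c⁻¹ * ((2 : ℝ) ^ (-(k : ℝ) / (ν : ℝ)) * (ν : ℝ) ^ ((q⁻¹).toReal - (p⁻¹).toReal))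
          ≤ entropyNumber k (idLp p q ν) ∧
      entropyNumber k (idLp p q ν)
          ≤ c * ((2 : ℝ) ^ (-(k : ℝ) / (ν : ℝ)) * (ν : ℝ) ^ ((q⁻¹).toReal - (p⁻¹).toReal)) := by
  refine ⟨6 * Real.exp 1, by positivity, fun ν hν k hk => ?_⟩
  obtain ⟨hs, hs₂⟩ := two_rpow_neg_div_le_natCast_two_pow_pred_rpow hk hν
  have hν₀ : ν ≠ 0 := by omega
  have hlow := entropyNumber_idLp_ge (p := p) (q := q) hν₀ k
  have hup := entropyNumber_idLp_le hqp.le hν₀ k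
  set D := (ν : ℝ) ^ ((q⁻¹).toReal - (p⁻¹).toReal)
  have hD : 0 < D := Real.rpow_pos_of_pos (by exact_mod_cast hν) _
  have he : 1 ≤ Real.exp 1 := Real.one_le_exp zero_le_one
  constructor
  · calc (6 * Real.exp 1)⁻¹ * ((2 : ℝ) ^ (-(k : ℝ) / ν) * D)
        ≤ (Real.exp 1)⁻¹ * (((2 ^ (k - 1) : ℕ) : ℝ) ^ (-(ν : ℝ)⁻¹) * D) := by gcongr; linarith
      _ ≤ entropyNumber k (idLp p q ν) := by rwa [inv_mul_eq_div]
  · calc entropyNumber k (idLp p q ν) ≤ D * (3 * (2 * (2 : ℝ) ^ (-(k : ℝ) / ν))) := by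
          refine hup.trans ?_
          gcongr
      _ = 6 * 1 * ((2 : ℝ) ^ (-(k : ℝ) / ν) * D) := by ring
      _ ≤ 6 * Real.exp 1 * ((2 : ℝ) ^ (-(k : ℝ) / ν) * D) := by gcongr

/-- Schütt's theorem, case `1 ≤ q < p ≤ ∞`:
`e_k(I_ν : l_p^ν → l_q^ν) ≍ 2^{-k/ν} ν^{1/q - 1/p}` for all `k ∈ ℕ`,
with constants depending only on `p, q`. -/
theorem entropy_id_lp_lq_q_lt_p (p q : ℝ≥0∞) [Fact (1 ≤ p)] [Fact (1 ≤ q)]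
    (hq : 1 ≤ q) (hqp : q < p) :
    ∃ c : ℝ, 0 < c ∧ ∀ ν : ℕ, 1 ≤ ν → ∀ k : ℕ, 1 ≤ k →
      c⁻¹ * ((2 : ℝ) ^ (-(k : ℝ) / (ν : ℝ)) * (ν : ℝ) ^ ((q⁻¹).toReal - (p⁻¹).toReal))
          ≤ entropyNumber k (idLp p q ν) ∧
      entropyNumber k (idLp p q ν)
          ≤ c * ((2 : ℝ) ^ (-(k : ℝ) / (ν : ℝ)) * (ν : ℝ) ^ ((q⁻¹).toReal - (p⁻¹).toReal)) :=
  entropy_id_lp_lq_q_lt_p_general p q hqp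
end

section
/- Let X, Y be normed spaces, V a bounded linear operator from X to Y, and {V_ν}_{ν ∈ N} a finite family of bounded linear operators from X to Y. Then for any n ∈ ℕ: e_{n + ⌊log₂ |N|⌋ + 1}(V) ≤ sup_{ν ∈ N} e_n(V_ν) + sup_{x ∈ B_X} inf_{ν ∈ N} ‖Vx − V_ν x‖_Y. -/
lemma entropySet_nonempty {X Y : Type*} [NormedAddCommGroup X] [NormedSpace ℝ X]
    [NormedAddCommGroup Y] [NormedSpace ℝ Y] (k : ℕ) (T : X →L[ℝ] Y) :
    {ε : ℝ | 0 < ε ∧ ∃ c : Fin (2 ^ (k - 1)) → Y,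
      ∀ x : X, ‖x‖ ≤ 1 → ∃ i, ‖T x - c i‖ ≤ ε}.Nonempty := by
  refine ⟨‖T‖ + 1, by positivity, fun _ => 0, fun x hx => ?_⟩
  refine ⟨⟨0, by positivity⟩, ?_⟩
  simp only [sub_zero]
  calc ‖T x‖ ≤ ‖T‖ * ‖x‖ := T.le_opNorm x
    _ ≤ ‖T‖ * 1 := by
        have := norm_nonneg T
        nlinarith
    _ ≤ ‖T‖ + 1 := by linarith

lemma entropyNumber_nonneg {X Y : Type*} [NormedAddCommGroup X] [NormedSpace ℝ X]
    [NormedAddCommGroup Y] [NormedSpace ℝ Y] (k : ℕ) (T : X →L[ℝ] Y) :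
    0 ≤ entropyNumber k T :=
  Real.sInf_nonneg (fun _ hx => hx.1.le)

/-- Lifshits' lemma: for a finite family `{V_ν}` of operators,
`e_{n+⌊log₂|N|⌋+1}(V) ≤ sup_ν e_n(V_ν) + sup_{x ∈ B_X} inf_ν ‖Vx - V_ν x‖`. -/
theorem lifshits_entropy_bound {X Y ι : Type*}
    [NormedAddCommGroup X] [NormedSpace ℝ X]
    [NormedAddCommGroup Y] [NormedSpace ℝ Y]
    [Fintype ι] [Nonempty ι]
    (V : X →L[ℝ] Y) (Vfam : ι → (X →L[ℝ] Y)) (n : ℕ) (hn : 1 ≤ n) :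
    entropyNumber (n + Nat.log 2 (Fintype.card ι) + 1) V ≤
      (⨆ i : ι, entropyNumber n (Vfam i)) +
        ⨆ x : {x : X // ‖x‖ ≤ 1}, ⨅ i : ι, ‖V x.1 - Vfam i x.1‖ := by
  classical
  set L := Nat.log 2 (Fintype.card ι) with hL
  set A := ⨆ i : ι, entropyNumber n (Vfam i) with hAdef
  set δ := ⨆ x : {x : X // ‖x‖ ≤ 1}, ⨅ i : ι, ‖V x.1 - Vfam i x.1‖ with hδdef
  obtain ⟨i0⟩ := ‹Nonempty ι›
  have hbddA : BddAbove (Set.range fun i : ι => entropyNumber n (Vfam i)) :=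
    (Set.finite_range _).bddAbove
  have hbddδ : BddAbove (Set.range fun x : {x : X // ‖x‖ ≤ 1} =>
      ⨅ i : ι, ‖V x.1 - Vfam i x.1‖) := by
    refine ⟨‖V‖ + ‖Vfam i0‖, ?_⟩
    rintro r ⟨x, rfl⟩
    have h1 : (⨅ i : ι, ‖V x.1 - Vfam i x.1‖) ≤ ‖V x.1 - Vfam i0 x.1‖ :=
      ciInf_le ⟨0, by rintro r ⟨i, rfl⟩; positivity⟩ i0
    have h2 : ‖V x.1‖ ≤ ‖V‖ * ‖x.1‖ := V.le_opNorm _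
    have h3 : ‖Vfam i0 x.1‖ ≤ ‖Vfam i0‖ * ‖x.1‖ := (Vfam i0).le_opNorm _
    have h4 : ‖V x.1 - Vfam i0 x.1‖ ≤ ‖V x.1‖ + ‖Vfam i0 x.1‖ := norm_sub_le _ _
    have h5 := x.2
    have h6 := norm_nonneg x.1
    have h7 := norm_nonneg V
    have h8 := norm_nonneg (Vfam i0)
    nlinarith
  have hA0 : 0 ≤ A :=
    le_trans (entropyNumber_nonneg n (Vfam i0)) (le_ciSup hbddA i0)
  have hδ0 : 0 ≤ δ := by
    have h1 : (⨅ i : ι, ‖V (0:X) - Vfam i (0:X)‖) = 0 := by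
      simp [ciInf_const]
    have h2 : (⨅ i : ι, ‖V (0:X) - Vfam i (0:X)‖) ≤ δ :=
      le_ciSup hbddδ (⟨0, by simp⟩ : {x : X // ‖x‖ ≤ 1})
    rw [h1] at h2
    exact h2
  refine le_of_forall_gt_imp_ge_of_dense fun ε hε => ?_
  have hη : 0 < ε - (A + δ) := by linarith
  set η := ε - (A + δ) with hηdef
  have hsel : ∀ i : ι, ∃ ε' ∈ {ε : ℝ | 0 < ε ∧ ∃ c : Fin (2 ^ (n - 1)) → Y,
      ∀ x : X, ‖x‖ ≤ 1 → ∃ j, ‖Vfam i x - c j‖ ≤ ε}, ε' < entropyNumber n (Vfam i) + η :=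
    fun i => Real.lt_sInf_add_pos (entropySet_nonempty n (Vfam i)) hη
  choose eps hepsmem hepslt using hsel
  choose cent hcent using fun i => (hepsmem i).2
  -- cardinality
  have hcard : Fintype.card (ι × Fin (2 ^ (n - 1))) ≤
      Fintype.card (Fin (2 ^ (n + L + 1 - 1))) := by
    have h1 : Fintype.card ι < 2 ^ (L + 1) :=
      Nat.lt_pow_succ_log_self (by norm_num) _
    have h2 : Fintype.card ι * 2 ^ (n - 1) ≤ 2 ^ (L + 1) * 2 ^ (n - 1) :=
      Nat.mul_le_mul_right _ h1.le
    have h3 : 2 ^ (L + 1) * 2 ^ (n - 1) = 2 ^ (n + L + 1 - 1) := by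
      rw [← pow_add]; congr 1; omega
    simpa [Fintype.card_prod] using h2.trans h3.le
  obtain ⟨f⟩ := Function.Embedding.nonempty_of_card_le hcard
  haveI : Nonempty (Fin (2 ^ (n - 1))) := ⟨⟨0, by positivity⟩⟩
  set c' : Fin (2 ^ (n + L + 1 - 1)) → Y :=
    fun j => (fun p : ι × Fin (2 ^ (n - 1)) => cent p.1 p.2) (Function.invFun f j) with hc'def
  refine csInf_le ⟨0, fun x hx => hx.1.le⟩ ?_
  refine ⟨by linarith, c', fun x hx => ?_⟩
  obtain ⟨i, hi⟩ := Finite.exists_min (fun i : ι => ‖V x - Vfam i x‖)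
  have hiδ : ‖V x - Vfam i x‖ ≤ δ := by
    have h1 : ‖V x - Vfam i x‖ ≤ ⨅ j : ι, ‖V x - Vfam j x‖ := le_ciInf hi
    have h2 : (⨅ j : ι, ‖V x - Vfam j x‖) ≤ δ :=
      le_ciSup hbddδ (⟨x, hx⟩ : {x : X // ‖x‖ ≤ 1})
    exact le_trans h1 h2
  obtain ⟨j, hj⟩ := hcent i x hx
  refine ⟨f (i, j), ?_⟩
  have hc : c' (f (i, j)) = cent i j := by
    simp only [hc'def]
    rw [Function.leftInverse_invFun f.injective (i, j)]
  rw [hc]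
  have hAi : entropyNumber n (Vfam i) ≤ A := le_ciSup hbddA i
  calc ‖V x - cent i j‖ ≤ ‖V x - Vfam i x‖ + ‖Vfam i x - cent i j‖ := by
        have := dist_triangle (V x) (Vfam i x) (cent i j)
        simpa [dist_eq_norm] using this
    _ ≤ δ + eps i := add_le_add hiδ hj
    _ ≤ δ + (A + η) := by linarith [hepslt i]
    _ = ε := by rw [hηdef]; ring
end

section
/- Let T be a finite rooted tree in which every vertex has at most k children, and let Φ: 2^{V(T)} → ℝ₊ be a superadditive set function, i.e. Φ(V₁ ∪ V₂) ≥ Φ(V₁) + Φ(V₂) whenever V₁ ∩ V₂ = ∅, with Φ(V(T)) > 0. Then there is a constant C(k) > 0 such that for every n ∈ ℕ there exists a partition of T into at most C(k)·n subtrees T_j such that Φ(V(T_j)) ≤ (k+2) Φ(V(T))/n for every j with |V(T_j)| ≥ 2. -/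
/-!
Put `τ = Φ(V) / n` and partition ancestor-closed vertex sets `R`, starting from `R = V`. If some
`ξ ∈ R` has `τ < Φ(R ∩ desc ξ)`, take one with the fewest such descendants: every child `c` of `ξ`
then has `Φ(R ∩ desc c) ≤ τ`, so `R ∩ desc ξ` splits into `{ξ}` and at most `k` light subtrees,
and what remains of `R` is again ancestor-closed. Otherwise `R` itself is a single light subtree.
Each removal produces at most `k + 1` parts and, by superadditivity, uses up more than `τ` of the
total mass `Φ(V) = n τ`, so there are at most `(k + 1) n + 1 ≤ (k + 2) n` parts.
-/

open Finset

namespace Finpartition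

variable {α : Type*} [DistribLattice α] [OrderBot α] [DecidableEq α]

def disjUnion {a b : α} (P : Finpartition a) (Q : Finpartition b) (h : Disjoint a b) :
    Finpartition (a ⊔ b) where
  parts := P.parts ∪ Q.parts
  supIndep := by
    rw [Finset.supIndep_iff_pairwiseDisjoint, coe_union, Set.pairwiseDisjoint_union]
    exact ⟨P.disjoint, Q.disjoint, fun _ hp _ hq _ => h.mono (P.le hp) (Q.le hq)⟩
  sup_parts := by rw [sup_union, P.sup_parts, Q.sup_parts]
  bot_notMem := by simp [P.bot_notMem, Q.bot_notMem]

@[simp]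
lemma disjUnion_parts {a b : α} (P : Finpartition a) (Q : Finpartition b) (h : Disjoint a b) :
    (P.disjUnion Q h).parts = P.parts ∪ Q.parts := rfl

end Finpartition

namespace SimpleGraph

variable {V : Type*}

def IsLightPart (G : SimpleGraph V) (Φ : Finset V → ℝ) (τ : ℝ) (p : Finset V) : Prop :=
  (G.induce (p : Set V)).Connected ∧ (2 ≤ #p → Φ p ≤ τ)

lemma isLightPart_singleton {G : SimpleGraph V} {Φ : Finset V → ℝ} {τ : ℝ} (ξ : V) :
    G.IsLightPart Φ τ {ξ} := by
  refine ⟨?_, fun h => by simp at h⟩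
  rw [coe_singleton, induce_singleton_eq_top]
  exact connected_top

variable [Fintype V] (G : SimpleGraph V) (root : V)

/-- The descendants of `ξ` in the tree rooted at `root`, including `ξ` itself: the vertices `η`
such that `ξ` lies on a geodesic from `root` to `η`. -/
noncomputable def descendants (ξ : V) : Finset V :=
  {η | G.dist root η = G.dist root ξ + G.dist ξ η}

noncomputable def children [DecidableRel G.Adj] (ξ : V) : Finset V :=
  {c | G.Adj ξ c ∧ G.dist root c = G.dist root ξ + 1}

def IsAncestorClosed (R : Finset V) : Prop :=
  ∀ ⦃ξ η : V⦄, η ∈ R → η ∈ G.descendants root ξ → ξ ∈ R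

variable {G root}

@[simp]
lemma mem_descendants {ξ η : V} :
    η ∈ G.descendants root ξ ↔ G.dist root η = G.dist root ξ + G.dist ξ η := by
  simp [descendants]

lemma self_mem_descendants (ξ : V) : ξ ∈ G.descendants root ξ := by simp

lemma mem_descendants_root (η : V) : η ∈ G.descendants root root := by simp

@[simp]
lemma mem_children [DecidableRel G.Adj] {ξ c : V} :
    c ∈ G.children root ξ ↔ G.Adj ξ c ∧ G.dist root c = G.dist root ξ + 1 := by
  simp [children]

lemma mem_descendants_of_mem_children [DecidableRel G.Adj] {ξ c : V}
    (hc : c ∈ G.children root ξ) : c ∈ G.descendants root ξ := by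
  obtain ⟨hadj, hdist⟩ := mem_children.1 hc
  rwa [mem_descendants, dist_eq_one_iff_adj.2 hadj]

lemma notMem_descendants_of_mem_children [DecidableRel G.Adj] {ξ c : V}
    (hc : c ∈ G.children root ξ) : ξ ∉ G.descendants root c := by
  rw [mem_children] at hc
  rw [mem_descendants]
  omega

lemma Connected.mem_descendants_trans (hG : G.Connected) {ξ z η : V}
    (hz : z ∈ G.descendants root ξ) (hη : η ∈ G.descendants root z) :
    η ∈ G.descendants root ξ := by
  have := hG.dist_triangle (u := root) (v := ξ) (w := η)
  have := hG.dist_triangle (u := ξ) (v := z) (w := η)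
  simp only [mem_descendants] at hz hη ⊢
  omega

lemma Connected.mem_descendants_of_mem_support (hG : G.Connected) {ξ η z : V}
    (hη : η ∈ G.descendants root ξ) {p : G.Walk ξ η} (hp : p.length = G.dist ξ η)
    (hz : z ∈ p.support) : z ∈ G.descendants root ξ ∧ η ∈ G.descendants root z := by
  obtain ⟨q, r, rfl⟩ := Walk.mem_support_iff_exists_append.1 hz
  rw [Walk.length_append] at hp
  have := dist_le q
  have := dist_le r
  have := hG.dist_triangle (u := ξ) (v := z) (w := η)
  have := hG.dist_triangle (u := root) (v := ξ) (w := z)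
  have := hG.dist_triangle (u := root) (v := z) (w := η)
  simp only [mem_descendants] at hη ⊢
  omega

lemma Connected.exists_mem_children_of_mem_descendants (hG : G.Connected) [DecidableRel G.Adj]
    {ξ η : V} (hη : η ∈ G.descendants root ξ) (hne : η ≠ ξ) :
    ∃ c ∈ G.children root ξ, η ∈ G.descendants root c := by
  obtain ⟨p, hp⟩ := hG.exists_walk_length_eq_dist ξ η
  cases p with
  | nil => exact absurd rfl hne
  | @cons _ c _ hadj q =>
    obtain ⟨hc, hηc⟩ := hG.mem_descendants_of_mem_support hη hp (z := c) (by simp)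
    rw [mem_descendants, dist_eq_one_iff_adj.2 hadj] at hc
    exact ⟨c, mem_children.2 ⟨hadj, hc⟩, hηc⟩

lemma Connected.descendants_eq_insert_biUnion_children [DecidableEq V] [DecidableRel G.Adj]
    (hG : G.Connected) (ξ : V) :
    G.descendants root ξ = insert ξ ((G.children root ξ).biUnion (G.descendants root)) := by
  ext η
  rw [mem_insert, mem_biUnion]
  constructor
  · intro hη
    by_cases hne : η = ξ
    · exact Or.inl hne
    · exact Or.inr (hG.exists_mem_children_of_mem_descendants hη hne)
  · rintro (rfl | ⟨c, hc, hη⟩)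
    · exact self_mem_descendants η
    · exact hG.mem_descendants_trans (mem_descendants_of_mem_children hc) hη

/-- Two children of `ξ` with a common descendant `η` give two paths `ξ → c ⇝ η`, which must
coincide in a tree. -/
lemma IsTree.pairwiseDisjoint_descendants_children (hT : G.IsTree) [DecidableRel G.Adj] (ξ : V) :
    (G.children root ξ : Set V).PairwiseDisjoint (G.descendants root) := by
  intro c hc c' hc' hne
  rw [Function.onFun, Finset.disjoint_left]
  intro η hη hη'
  have hG := hT.connected
  have hpath : ∀ {c}, c ∈ G.children root ξ → η ∈ G.descendants root c →
      ∃ (h : G.Adj ξ c) (p : G.Walk c η), (Walk.cons h p).IsPath := by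
    intro c hc hη
    obtain ⟨p, hp⟩ := hG.exists_walk_length_eq_dist c η
    refine ⟨(mem_children.1 hc).1, p, (p.isPath_of_length_eq_dist hp).cons fun hξ => ?_⟩
    exact notMem_descendants_of_mem_children hc (hG.mem_descendants_of_mem_support hη hp hξ).1
  obtain ⟨h, p, hp⟩ := hpath hc hη
  obtain ⟨h', p', hp'⟩ := hpath hc' hη'
  exact hne (by simpa using congrArg (Walk.getVert · 1) ((hT.existsUnique_path ξ η).unique hp hp'))

lemma Connected.card_inter_descendants_lt [DecidableEq V] [DecidableRel G.Adj]
    (hG : G.Connected) {R : Finset V} {ξ c : V} (hξ : ξ ∈ R) (hc : c ∈ G.children root ξ) :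
    #(R ∩ G.descendants root c) < #(R ∩ G.descendants root ξ) := by
  refine card_lt_card ((ssubset_iff_of_subset ?_).2 ⟨ξ, ?_, ?_⟩)
  · exact inter_subset_inter_left fun η =>
      hG.mem_descendants_trans (mem_descendants_of_mem_children hc)
  · exact mem_inter.2 ⟨hξ, self_mem_descendants ξ⟩
  · exact fun h => notMem_descendants_of_mem_children hc (mem_inter.1 h).2

lemma isAncestorClosed_univ : G.IsAncestorClosed root univ := fun _ _ _ _ => mem_univ _

lemma IsAncestorClosed.root_mem {R : Finset V} (hR : G.IsAncestorClosed root R)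
    (hne : R.Nonempty) : root ∈ R :=
  hR hne.choose_spec (mem_descendants_root _)

namespace IsAncestorClosed

variable [DecidableEq V] {R : Finset V}

lemma sdiff_descendants (hR : G.IsAncestorClosed root R) (hG : G.Connected) (ξ : V) :
    G.IsAncestorClosed root (R \ G.descendants root ξ) := by
  intro z η hη hηz
  rw [mem_sdiff] at hη ⊢
  exact ⟨hR hη.1 hηz, fun hz => hη.2 (hG.mem_descendants_trans hz hηz)⟩

lemma connected_induce_inter_descendants (hR : G.IsAncestorClosed root R) (hG : G.Connected)
    {c : V} (hc : c ∈ R) : (G.induce (R ∩ G.descendants root c : Finset V)).Connected := by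
  refine induce_connected_of_patches c (by simpa [mem_coe] using hc) ?_
  intro η hη
  rw [coe_inter, Set.mem_inter_iff, mem_coe, mem_coe] at hη
  obtain ⟨p, hp⟩ := hG.exists_walk_length_eq_dist c η
  refine ⟨{z | z ∈ p.support}, ?_, p.start_mem_support, p.end_mem_support,
    (p.connected_induce_support).preconnected _ _⟩
  intro z hz
  obtain ⟨hzc, hηz⟩ := hG.mem_descendants_of_mem_support hη.2 hp hz
  exact mem_inter.2 ⟨hR hη.1 hηz, hzc⟩

end IsAncestorClosed

variable {Φ : Finset V → ℝ} {τ : ℝ}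

lemma IsAncestorClosed.exists_finpartition_of_forall_le [DecidableEq V] {R : Finset V}
    (hR : G.IsAncestorClosed root R) (hG : G.Connected)
    (hlight : ∀ ξ ∈ R, Φ (R ∩ G.descendants root ξ) ≤ τ) :
    ∃ P : Finpartition R, (∀ p ∈ P.parts, G.IsLightPart Φ τ p) ∧ #P.parts ≤ 1 := by
  refine ⟨⊤, fun p hp => ?_,
    (card_le_card (Finpartition.parts_top_subset R)).trans_eq (card_singleton R)⟩
  obtain rfl := mem_singleton.1 (Finpartition.parts_top_subset R hp)
  have hroot := hR.root_mem (Finpartition.nonempty_of_mem_parts _ hp)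
  have hpp : p ∩ G.descendants root root = p := inter_eq_left.2 fun η _ => mem_descendants_root η
  rw [← hpp]
  exact ⟨hR.connected_induce_inter_descendants hG hroot, fun _ => hlight root hroot⟩

lemma IsTree.exists_finpartition_inter_descendants [DecidableEq V] [DecidableRel G.Adj]
    (hT : G.IsTree) {R : Finset V} (hR : G.IsAncestorClosed root R) {ξ : V} (hξ : ξ ∈ R)
    (hlight : ∀ c ∈ G.children root ξ, c ∈ R → Φ (R ∩ G.descendants root c) ≤ τ) :
    ∃ Q : Finpartition (R ∩ G.descendants root ξ),
      (∀ p ∈ Q.parts, G.IsLightPart Φ τ p) ∧ #Q.parts ≤ #(G.children root ξ) + 1 := by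
  set F := insert {ξ} ((G.children root ξ).image (fun c => R ∩ G.descendants root c))
  have hF : (F : Set (Finset V)).PairwiseDisjoint id := by
    rw [coe_insert, coe_image]
    refine Set.PairwiseDisjoint.insert ?_ ?_
    · rintro _ ⟨c, hc, rfl⟩ _ ⟨c', hc', rfl⟩ hne
      exact (hT.pairwiseDisjoint_descendants_children ξ hc hc' fun h => hne (h ▸ rfl)).mono
        inter_subset_right inter_subset_right
    · rintro _ ⟨c, hc, rfl⟩ -
      exact disjoint_singleton_left.2 fun h =>
        notMem_descendants_of_mem_children hc (mem_inter.1 h).2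
  have hsup : F.sup id = R ∩ G.descendants root ξ := by
    rw [hT.connected.descendants_eq_insert_biUnion_children ξ]
    ext η
    simp only [F, sup_insert, sup_image, id, Function.comp_def, sup_eq_union, mem_union,
      mem_singleton, mem_sup, mem_inter, mem_insert, mem_biUnion]
    constructor
    · rintro (rfl | ⟨c, hc, hηR, hηc⟩)
      · exact ⟨hξ, Or.inl rfl⟩
      · exact ⟨hηR, Or.inr ⟨c, hc, hηc⟩⟩
    · rintro ⟨hηR, rfl | ⟨c, hc, hηc⟩⟩
      · exact Or.inl rfl
      · exact Or.inr ⟨c, hc, hηR, hηc⟩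
  refine ⟨(Finpartition.ofPairwiseDisjoint F hF).copy hsup, fun p hp => ?_, ?_⟩
  · simp only [Finpartition.copy_parts, Finpartition.ofPairwiseDisjoint_parts, mem_erase, F,
      mem_insert, mem_image] at hp
    obtain ⟨hne, rfl | ⟨c, hc, rfl⟩⟩ := hp
    · exact isLightPart_singleton ξ
    · obtain ⟨η, hη⟩ := nonempty_iff_ne_empty.2 hne
      have hcR : c ∈ R := hR (mem_inter.1 hη).1 (mem_inter.1 hη).2
      exact ⟨hR.connected_induce_inter_descendants hT.connected hcR, fun _ => hlight c hc hcR⟩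
  · calc #((Finpartition.ofPairwiseDisjoint F hF).copy hsup).parts ≤ #F := card_erase_le
      _ ≤ #((G.children root ξ).image (fun c => R ∩ G.descendants root c)) + 1 :=
        card_insert_le _ _
      _ ≤ #(G.children root ξ) + 1 := by gcongr; exact card_image_le

theorem IsTree.exists_finpartition_of_isAncestorClosed [DecidableEq V] [DecidableRel G.Adj]
    (hT : G.IsTree) {k : ℕ} (hk : ∀ ξ, #(G.children root ξ) ≤ k) (hΦ₀ : ∀ s, 0 ≤ Φ s)
    (hΦ : ∀ s t, Disjoint s t → Φ s + Φ t ≤ Φ (s ∪ t)) (hτ : 0 ≤ τ) (R : Finset V)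
    (hR : G.IsAncestorClosed root R) :
    ∃ P : Finpartition R, (∀ p ∈ P.parts, G.IsLightPart Φ τ p) ∧
      #P.parts * τ ≤ (k + 1) * Φ R + τ := by
  induction R using Finset.strongInduction with
  | H R ih =>
  by_cases hheavy : ∃ ξ ∈ R, τ < Φ (R ∩ G.descendants root ξ)
  swap
  · push Not at hheavy
    obtain ⟨P, hP, hPcard⟩ := hR.exists_finpartition_of_forall_le hT.connected hheavy
    refine ⟨P, hP, ?_⟩
    have : (#P.parts : ℝ) ≤ 1 := by exact_mod_cast hPcard
    have := hΦ₀ R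
    nlinarith
  obtain ⟨ξ, hξ, hmin⟩ := exists_min_image (R.filter fun ξ => τ < Φ (R ∩ G.descendants root ξ))
    (fun ξ => #(R ∩ G.descendants root ξ)) (by simpa [Finset.Nonempty] using hheavy)
  rw [mem_filter] at hξ
  obtain ⟨P, hP, hPcard⟩ := ih (R \ G.descendants root ξ)
    ((ssubset_iff_of_subset sdiff_subset).2
      ⟨ξ, hξ.1, fun h => (mem_sdiff.1 h).2 (self_mem_descendants ξ)⟩)
    (hR.sdiff_descendants hT.connected ξ)
  obtain ⟨Q, hQ, hQcard⟩ := hT.exists_finpartition_inter_descendants hR hξ.1 fun c hc hcR =>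
    not_lt.1 fun hc_heavy => (hT.connected.card_inter_descendants_lt hξ.1 hc).not_ge
      (hmin c (mem_filter.2 ⟨hcR, hc_heavy⟩))
  refine ⟨(P.disjUnion Q (disjoint_sdiff_inter _ _)).copy (sdiff_union_inter _ _), ?_, ?_⟩
  · simp only [Finpartition.copy_parts, Finpartition.disjUnion_parts, mem_union]
    exact fun p => Or.rec (hP p) (hQ p)
  have hcard : (#((P.disjUnion Q (disjoint_sdiff_inter _ _)).copy
      (sdiff_union_inter _ _)).parts : ℝ) ≤ #P.parts + (k + 1) := by
    simp only [Finpartition.copy_parts, Finpartition.disjUnion_parts]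
    exact_mod_cast (card_union_le _ _).trans (by have := hk ξ; omega)
  have hsplit := hΦ _ _ (disjoint_sdiff_inter R (G.descendants root ξ))
  rw [sdiff_union_inter] at hsplit
  have hpaid : (k + 1) * τ ≤ (k + 1) * Φ (R ∩ G.descendants root ξ) := by
    gcongr
    exact hξ.2.le
  calc _ ≤ (#P.parts + (k + 1) : ℝ) * τ := by gcongr
    _ ≤ (k + 1) * (Φ (R \ G.descendants root ξ) + Φ (R ∩ G.descendants root ξ)) + τ := by
      linarith
    _ ≤ (k + 1) * Φ R + τ := by gcongr

end SimpleGraph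

open SimpleGraph

/-- Tree partition lemma: if every vertex of a finite rooted tree `G` has at
most `k` children and `Φ` is a nonnegative superadditive set function on
vertex sets with `Φ(V) > 0`, then there is `C(k) > 0` such that for every
`n ≥ 1` the tree can be partitioned into at most `C(k)·n` subtrees
(nonempty vertex sets inducing connected subgraphs) each of which, if it has
at least two vertices, satisfies `Φ ≤ (k+2) Φ(V) / n`. -/
theorem tree_partition_lemma (k : ℕ) :
    ∃ C : ℝ, 0 < C ∧
      ∀ (V : Type) [Fintype V] [DecidableEq V] (G : SimpleGraph V) (root : V),
        G.IsTree →
        (∀ ξ : V, ({η : V | G.Adj ξ η ∧ G.dist root η = G.dist root ξ + 1} : Set V).ncard ≤ k) →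
        ∀ Φ : Finset V → ℝ,
          (∀ s : Finset V, 0 ≤ Φ s) →
          (∀ s t : Finset V, Disjoint s t → Φ s + Φ t ≤ Φ (s ∪ t)) →
          0 < Φ Finset.univ →
          ∀ n : ℕ, 1 ≤ n →
            ∃ P : Finset (Finset V),
              (P.card : ℝ) ≤ C * n ∧
              (∀ s ∈ P, s.Nonempty) ∧
              (∀ s ∈ P, ∀ t ∈ P, s ≠ t → Disjoint s t) ∧
              (∀ x : V, ∃ s ∈ P, x ∈ s) ∧
              (∀ s ∈ P, (G.induce (↑s : Set V)).Connected) ∧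
              (∀ s ∈ P, 2 ≤ s.card → Φ s ≤ (k + 2) * Φ Finset.univ / n) := by
  refine ⟨k + 2, by positivity, ?_⟩
  intro V _ _ G root hT hk Φ hΦ₀ hΦ hΦpos n hn
  classical
  have hchildren : ∀ ξ, #(G.children root ξ) ≤ k := fun ξ => by
    simpa [← Set.ncard_coe_finset, children] using hk ξ
  have hn₀ : (0 : ℝ) < n := by exact_mod_cast hn
  set τ := Φ univ / n
  have hτ : 0 < τ := by positivity
  have hτn : τ * n = Φ univ := div_mul_cancel₀ _ hn₀.ne'
  obtain ⟨P, hP, hPcard⟩ := hT.exists_finpartition_of_isAncestorClosed hchildren hΦ₀ hΦ hτ.le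
    univ isAncestorClosed_univ
  refine ⟨P.parts, ?_, fun s => P.nonempty_of_mem_parts, fun s hs t ht => P.disjoint hs ht,
    fun x => P.exists_mem (mem_univ x), fun s hs => (hP s hs).1,
    fun s hs h2 => ((hP s hs).2 h2).trans ?_⟩
  · have : (#P.parts : ℝ) ≤ (k + 1) * n + 1 := by
      refine le_of_mul_le_mul_right ?_ hτ
      nlinarith
    have : (1 : ℝ) ≤ n := by exact_mod_cast hn
    linarith
  · rw [mul_div_assoc]
    exact le_mul_of_one_le_left hτ.le (by linarith)
end

section
/- Let 1 ≤ q < p ≤ ∞ (so that 1/q − 1/p > 0), and suppose numbers γ_* > 0, k_* ∈ ℕ, λ_* ≤ μ_*, and a slowly varying absolutely continuous function ψ_* are given with ν̄_t = 2^{γ_* k_* t} ψ_*(2^{k_* t}). Suppose additionally that for all t' ≥ t, 2^{−μ_* k_* t'} u_*(2^{k_* t'}) ν̄_{t'}^{1/q − 1/p} ≤ c · 2^{−μ_* k_* t} u_*(2^{k_* t}) ν̄_t^{1/q − 1/p} where u_* is slowly varying. Then the doubly-exponential growth condition ν̄_t = 2^{γ_* 2^t} ψ_*(2^{2^t}) (with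 k_* = 1) is incompatible with this monotonicity: no choice of parameters satisfies both. -/
/-!
Slow variation gives, for every `δ > 0`, `f (2 ^ m) ≥ C 2 ^ (-δ m)` for large `m`: near `y` the
logarithmic derivative of `f` is `o(1 / y)`, so each doubling of the argument costs at most a
factor `2 ^ (-δ)`. Hence `u (2 ^ t) ≥ C 2 ^ (-t)` and `ψ (2 ^ 2 ^ t) ≥ C 2 ^ (-γ 2 ^ t / 2)`, so
with `α = 1/q - 1/p > 0` the left side of the monotonicity condition is at least
`K 2 ^ (α γ 2 ^ t / 2 - (μ + 1) t)`, which is unbounded, whereas the condition with `t = 0`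
bounds it.
-/

open Filter MeasureTheory Set Topology
open scoped ENNReal Interval

/-- `f'` stands for the a.e. derivative of `f`; absolute continuity on `(0, ∞)` is encoded by
the fundamental theorem of calculus. -/
structure IsSlowlyVarying (f f' : ℝ → ℝ) : Prop where
  pos : ∀ y, 0 < y → 0 < f y
  sub_eq_integral : ∀ a b, 0 < a → a ≤ b → f b - f a = ∫ w in a..b, f' w
  tendsto : Tendsto (fun y => y * f' y / f y) atTop (𝓝 0)

lemma continuousOn_Icc_of_sub_eq_integral {f f' : ℝ → ℝ} {y z : ℝ}
    (hac : ∀ a b, 0 < a → a ≤ b → f b - f a = ∫ w in a..b, f' w) (hy : 0 < y) (hyz : y ≤ z)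
    (hint : IntervalIntegrable f' volume y z) : ContinuousOn f (Icc y z) := by
  have hprim : ContinuousOn (fun x => f y + ∫ w in y..x, f' w) (Icc y z) := by
    rw [← uIcc_of_le hyz]
    exact continuousOn_const.add
      (intervalIntegral.continuousOn_primitive_interval' hint left_mem_uIcc)
  refine hprim.congr fun x hx => ?_
  linarith [hac y x hy hx.1]

/-- Compare `f (2y)` with the maximum `M = f ξ` of `f` on `[y, 2y]`:
`|f (2y) - f ξ| ≤ (δ M / y) (2y - ξ) ≤ δ M`. -/
lemma one_sub_mul_le_of_abs_deriv_le {f f' : ℝ → ℝ} {y δ : ℝ}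
    (hpos : ∀ w, 0 < w → 0 < f w)
    (hac : ∀ a b, 0 < a → a ≤ b → f b - f a = ∫ w in a..b, f' w) (hy : 0 < y) (hδ : 0 ≤ δ)
    (hbound : ∀ w ∈ Icc y (2 * y), |f' w| ≤ δ * (f w / w)) :
    (1 - δ) * f y ≤ f (2 * y) := by
  have hy2 : y ≤ 2 * y := by linarith
  have hfy := hpos y hy
  by_cases hint : IntervalIntegrable f' volume y (2 * y)
  swap
  · have := hac y (2 * y) hy hy2
    rw [intervalIntegral.integral_undef hint] at this
    nlinarith
  obtain ⟨ξ, hξ, hmax⟩ := isCompact_Icc.exists_isMaxOn (nonempty_Icc.mpr hy2)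
    (continuousOn_Icc_of_sub_eq_integral hac hy hy2 hint)
  have hderiv : ∀ x ∈ Ι ξ (2 * y), ‖f' x‖ ≤ δ * (f ξ / y) := by
    intro x hx
    rw [uIoc_of_le hξ.2] at hx
    have hxy : y ≤ x := hξ.1.trans hx.1.le
    have hx : x ∈ Icc y (2 * y) := ⟨hxy, hx.2⟩
    calc ‖f' x‖ ≤ δ * (f x / x) := hbound x hx
      _ ≤ δ * (f ξ / y) := by
        gcongr
        · exact (hpos ξ (hy.trans_le hξ.1)).le
        · exact hmax hx
  have hdiff : |f (2 * y) - f ξ| ≤ δ * (f ξ / y) * |2 * y - ξ| := by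
    rw [hac ξ (2 * y) (hy.trans_le hξ.1) hξ.2]
    exact intervalIntegral.norm_integral_le_of_norm_le_const hderiv
  have hlen : δ * (f ξ / y) * |2 * y - ξ| ≤ δ * f ξ := by
    rw [abs_of_nonneg (sub_nonneg.mpr hξ.2)]
    calc δ * (f ξ / y) * (2 * y - ξ) ≤ δ * (f ξ / y) * y := by
          have := hpos ξ (hy.trans_le hξ.1)
          gcongr
          linarith [hξ.1]
      _ = δ * f ξ := by field_simp
  have hfξ : f y ≤ f ξ := hmax (left_mem_Icc.mpr hy2)
  rcases le_total δ 1 with hδ1 | hδ1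
  · nlinarith [neg_abs_le (f (2 * y) - f ξ)]
  · nlinarith [hpos (2 * y) (by linarith)]

lemma exists_pos_mul_pow_le_of_eventually_mul_le_succ {g : ℕ → ℝ} {r : ℝ} (hg : ∀ m, 0 < g m)
    (hr : 0 < r) (h : ∀ᶠ m in atTop, r * g m ≤ g (m + 1)) :
    ∃ C > 0, ∀ᶠ m in atTop, C * r ^ m ≤ g m := by
  obtain ⟨N, hN⟩ := eventually_atTop.mp h
  refine ⟨g N / r ^ N, by have := hg N; positivity, eventually_atTop.mpr ⟨N, fun m hm => ?_⟩⟩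
  induction m, hm using Nat.le_induction with
  | base => field_simp; rfl
  | succ m hm ih =>
    calc g N / r ^ N * r ^ (m + 1) = r * (g N / r ^ N * r ^ m) := by ring
      _ ≤ r * g m := by gcongr
      _ ≤ g (m + 1) := hN m hm

namespace IsSlowlyVarying

variable {f f' : ℝ → ℝ}

lemma eventually_mul_le_apply_two_mul (hf : IsSlowlyVarying f f') {r : ℝ} (hr : r < 1) :
    ∀ᶠ y in atTop, r * f y ≤ f (2 * y) := by
  have habs : Tendsto (fun w => |w * f' w / f w|) atTop (𝓝 0) := by
    simpa using hf.tendsto.abs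
  have hbound : ∀ᶠ w in atTop, 0 < w ∧ |f' w| ≤ (1 - r) * (f w / w) := by
    filter_upwards [habs.eventually (ge_mem_nhds (sub_pos.mpr hr)), eventually_gt_atTop 0]
      with w hw hw0
    refine ⟨hw0, ?_⟩
    have hfw := hf.pos w hw0
    calc |f' w| = |w * f' w / f w| * (f w / w) := by
          rw [abs_div, abs_mul, abs_of_pos hfw, abs_of_pos hw0]
          field_simp
      _ ≤ (1 - r) * (f w / w) := by gcongr
  filter_upwards [eventually_forall_ge_atTop.mpr hbound] with y hy
  simpa using one_sub_mul_le_of_abs_deriv_le hf.pos hf.sub_eq_integral (hy y le_rfl).1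
    (sub_nonneg.mpr hr.le) fun w hw => (hy w hw.1).2

lemma exists_pos_mul_rpow_le (hf : IsSlowlyVarying f f') {δ : ℝ} (hδ : 0 < δ) :
    ∃ C > 0, ∀ᶠ m : ℕ in atTop, C * (2 : ℝ) ^ (-(δ * m)) ≤ f (2 ^ m) := by
  have hr : (2 : ℝ) ^ (-δ) < 1 := Real.rpow_lt_one_of_one_lt_of_neg one_lt_two (neg_lt_zero.mpr hδ)
  have hstep : ∀ᶠ m : ℕ in atTop, (2 : ℝ) ^ (-δ) * f (2 ^ m) ≤ f (2 ^ (m + 1)) := by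
    simpa only [pow_succ'] using (tendsto_pow_atTop_atTop_of_one_lt one_lt_two).eventually
      (hf.eventually_mul_le_apply_two_mul hr)
  obtain ⟨C, hC, hCm⟩ := exists_pos_mul_pow_le_of_eventually_mul_le_succ
    (fun m => hf.pos _ (by positivity)) (by positivity) hstep
  refine ⟨C, hC, hCm.mono fun m hm => ?_⟩
  rwa [← neg_mul, Real.rpow_mul_natCast two_pos.le]

end IsSlowlyVarying

lemma toReal_inv_lt_inv {p : ℝ≥0∞} {q : ℝ} (hq : 0 < q) (hqp : ENNReal.ofReal q < p) :
    (p⁻¹).toReal < q⁻¹ := by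
  apply ENNReal.toReal_lt_of_lt_ofReal
  rw [ENNReal.ofReal_inv_of_pos hq]
  exact ENNReal.inv_lt_inv.mpr hqp

lemma tendsto_two_rpow_mul_two_pow_sub_mul {a : ℝ} (ha : 0 < a) (b : ℝ) :
    Tendsto (fun n : ℕ => (2 : ℝ) ^ (a * 2 ^ n - b * n)) atTop atTop := by
  have hratio : Tendsto (fun n : ℕ => a - b * ((n : ℝ) ^ 1 / 2 ^ n)) atTop (𝓝 a) := by
    simpa using ((tendsto_pow_const_div_const_pow_of_one_lt 1 one_lt_two).const_mul b).const_sub a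
  have hexp := (tendsto_pow_atTop_atTop_of_one_lt (one_lt_two (α := ℝ))).atTop_mul_pos ha hratio
  refine (tendsto_rpow_atTop_of_base_gt_one 2 one_lt_two).comp (hexp.congr fun n => ?_)
  field_simp

lemma mul_two_rpow_le_two_rpow_mul_mul_rpow {α μ γ Cu Cψ U Ψ x y : ℝ} (hα : 0 ≤ α)
    (hCu : 0 < Cu) (hCψ : 0 < Cψ) (hU : Cu * 2 ^ (-(1 * x)) ≤ U)
    (hΨ : Cψ * 2 ^ (-(γ / 2 * y)) ≤ Ψ) :
    Cu * Cψ ^ α * 2 ^ (α * (γ / 2) * y - (μ + 1) * x) ≤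
      2 ^ (-(μ * x)) * U * (2 ^ (γ * y) * Ψ) ^ α := by
  have hV : Cψ * 2 ^ (γ / 2 * y) ≤ 2 ^ (γ * y) * Ψ :=
    calc Cψ * (2 : ℝ) ^ (γ / 2 * y) = 2 ^ (γ * y) * (Cψ * 2 ^ (-(γ / 2 * y))) := by
          rw [mul_left_comm, ← Real.rpow_add two_pos]
          ring_nf
      _ ≤ 2 ^ (γ * y) * Ψ := by gcongr
  have hVα : Cψ ^ α * 2 ^ (α * (γ / 2) * y) ≤ (2 ^ (γ * y) * Ψ) ^ α :=
    calc Cψ ^ α * (2 : ℝ) ^ (α * (γ / 2) * y) = (Cψ * 2 ^ (γ / 2 * y)) ^ α := by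
          rw [Real.mul_rpow hCψ.le (by positivity), ← Real.rpow_mul two_pos.le]
          ring_nf
      _ ≤ (2 ^ (γ * y) * Ψ) ^ α := by gcongr
  have hU0 : 0 ≤ U := le_trans (by positivity) hU
  calc Cu * Cψ ^ α * (2 : ℝ) ^ (α * (γ / 2) * y - (μ + 1) * x)
      = 2 ^ (-(μ * x)) * (Cu * 2 ^ (-(1 * x))) * (Cψ ^ α * 2 ^ (α * (γ / 2) * y)) := by
        rw [show α * (γ / 2) * y - (μ + 1) * x = -(μ * x) + -(1 * x) + α * (γ / 2) * y by ring,
          Real.rpow_add two_pos, Real.rpow_add two_pos]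
        ring
    _ ≤ 2 ^ (-(μ * x)) * U * (2 ^ (γ * y) * Ψ) ^ α := by gcongr

theorem doubly_exponential_incompatible_general
    (p : ℝ≥0∞) (q : ℝ) (hq : 1 ≤ q) (hqp : ENNReal.ofReal q < p)
    (γs : ℝ) (hγ : 0 < γs) (ks : ℕ) (hks : ks = 1)
    (mus : ℝ)
    (u u' ψ ψ' : ℝ → ℝ)
    (hupos : ∀ y : ℝ, 0 < y → 0 < u y)
    (huac : ∀ a b : ℝ, 0 < a → a ≤ b → u b - u a = ∫ y in a..b, u' y)
    (hulim : Tendsto (fun y => y * u' y / u y) atTop (nhds 0))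
    (hψpos : ∀ y : ℝ, 0 < y → 0 < ψ y)
    (hψac : ∀ a b : ℝ, 0 < a → a ≤ b → ψ b - ψ a = ∫ y in a..b, ψ' y)
    (hψlim : Tendsto (fun y => y * ψ' y / ψ y) atTop (nhds 0))
    (ν : ℕ → ℝ)
    (hν : ∀ t : ℕ, ν t = (2 : ℝ) ^ (γs * (2 : ℝ) ^ (t : ℕ)) * ψ ((2 : ℝ) ^ ((2 : ℕ) ^ t)))
    (c : ℝ)
    (hmono : ∀ t t' : ℕ, t ≤ t' →
      (2 : ℝ) ^ (-(mus * (ks : ℝ) * (t' : ℝ))) * u ((2 : ℝ) ^ ((ks : ℝ) * (t' : ℝ))) *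
          ν t' ^ (q⁻¹ - (p⁻¹).toReal) ≤
        c * ((2 : ℝ) ^ (-(mus * (ks : ℝ) * (t : ℝ))) * u ((2 : ℝ) ^ ((ks : ℝ) * (t : ℝ))) *
          ν t ^ (q⁻¹ - (p⁻¹).toReal))) :
    False := by
  subst hks
  set α := q⁻¹ - (p⁻¹).toReal
  have hα : 0 < α := sub_pos.mpr (toReal_inv_lt_inv (by linarith) hqp)
  have hbound (n : ℕ) : (2 : ℝ) ^ (-(mus * n)) * u (2 ^ n) * ν n ^ α ≤ c * (u 1 * ν 0 ^ α) := by
    simpa [Real.rpow_natCast] using hmono 0 n n.zero_le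
  obtain ⟨Cu, hCu, hu⟩ := IsSlowlyVarying.exists_pos_mul_rpow_le ⟨hupos, huac, hulim⟩ one_pos
  obtain ⟨Cψ, hCψ, hψ⟩ :=
    IsSlowlyVarying.exists_pos_mul_rpow_le ⟨hψpos, hψac, hψlim⟩ (half_pos hγ)
  have hlower : ∀ᶠ n : ℕ in atTop, Cu * Cψ ^ α * 2 ^ (α * (γs / 2) * 2 ^ n - (mus + 1) * n) ≤
      (2 : ℝ) ^ (-(mus * n)) * u (2 ^ n) * ν n ^ α := by
    filter_upwards [hu, (tendsto_pow_atTop_atTop_of_one_lt (α := ℕ) one_lt_two).eventually hψ]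
      with n hun hψn
    push_cast at hψn
    rw [hν n]
    exact mul_two_rpow_le_two_rpow_mul_mul_rpow hα.le hCu hCψ hun hψn
  have hαγ : 0 < α * (γs / 2) := by positivity
  have hgrowth := ((tendsto_two_rpow_mul_two_pow_sub_mul hαγ (mus + 1)).const_mul_atTop
    (by positivity : 0 < Cu * Cψ ^ α)).eventually_gt_atTop (c * (u 1 * ν 0 ^ α))
  obtain ⟨n, hlow, hbig⟩ := (hlower.and hgrowth).exists
  linarith [hbound n]

/-- Remark 3 of the paper: for `1 ≤ q < p ≤ ∞`, the monotonicity condition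
(2ll), namely `2^{-μ k t'} u(2^{k t'}) ν̄_{t'}^{1/q-1/p} ≤ c · 2^{-μ k t} u(2^{k t}) ν̄_t^{1/q-1/p}`
for all `t' ≥ t`, is incompatible with the doubly exponential growth
`ν̄_t = 2^{γ 2^t} ψ(2^{2^t})` (with `k_* = 1`), where `u, ψ` are positive,
absolutely continuous and slowly varying. -/
theorem doubly_exponential_incompatible
    (p : ℝ≥0∞) (q : ℝ) (hq : 1 ≤ q) (hqp : ENNReal.ofReal q < p)
    (γs : ℝ) (hγ : 0 < γs) (ks : ℕ) (hks : ks = 1)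
    (lams mus : ℝ) (hlam : 0 ≤ lams) (hlm : lams ≤ mus)
    (u u' ψ ψ' : ℝ → ℝ)
    (hupos : ∀ y : ℝ, 0 < y → 0 < u y)
    (huac : ∀ a b : ℝ, 0 < a → a ≤ b → u b - u a = ∫ y in a..b, u' y)
    (hulim : Tendsto (fun y => y * u' y / u y) atTop (nhds 0))
    (hψpos : ∀ y : ℝ, 0 < y → 0 < ψ y)
    (hψac : ∀ a b : ℝ, 0 < a → a ≤ b → ψ b - ψ a = ∫ y in a..b, ψ' y)
    (hψlim : Tendsto (fun y => y * ψ' y / ψ y) atTop (nhds 0))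
    (ν : ℕ → ℝ)
    (hν : ∀ t : ℕ, ν t = (2 : ℝ) ^ (γs * (2 : ℝ) ^ (t : ℕ)) * ψ ((2 : ℝ) ^ ((2 : ℕ) ^ t)))
    (c : ℝ) (hc : 0 < c)
    (hmono : ∀ t t' : ℕ, t ≤ t' →
      (2 : ℝ) ^ (-(mus * (ks : ℝ) * (t' : ℝ))) * u ((2 : ℝ) ^ ((ks : ℝ) * (t' : ℝ))) *
          ν t' ^ (q⁻¹ - (p⁻¹).toReal) ≤
        c * ((2 : ℝ) ^ (-(mus * (ks : ℝ) * (t : ℝ))) * u ((2 : ℝ) ^ ((ks : ℝ) * (t : ℝ))) *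
          ν t ^ (q⁻¹ - (p⁻¹).toReal))) :
    False :=
  doubly_exponential_incompatible_general p q hq hqp γs hγ ks hks mus u u' ψ ψ' hupos huac hulim
    hψpos hψac hψlim ν hν c hmono
end
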